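/- arXiv:2407.16474 — 3 statements merged into one kernel-verified Lean document; each statement's English description precedes it below -/
import Mathlib

section
/- Let j ∈ ℤ and x > 0. For every continuous function f : [0,∞) → ℝ belonging to E, it holds lim_{n→∞} (S_{n,j}f)(x) = f(x). -/
open MeasureTheory Real Filter

/-- Szász basis function `s_{n,k}(x)` for natural index `k`. -/
noncomputable def szasz (n k : ℕ) (x : ℝ) : ℝ :=
  Real.exp (-(n : ℝ) * x) * ((n : ℝ) * x) ^ k / (Nat.factorial k)

/-- Szász basis function for integer index, vanishing for negative index. -/
noncomputable def szaszZ (n : ℕ) (k : ℤ) (x : ℝ) : ℝ :=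
  if 0 ≤ k then szasz n k.toNat x else 0

/-- The generalized Szász–Mirakjan–Durrmeyer operator `S_{n,j}`. -/
noncomputable def Sop (n : ℕ) (j : ℤ) (f : ℝ → ℝ) (x : ℝ) : ℝ :=
  f 0 * ∑ k ∈ Finset.range j.toNat, szasz n k x
    + ∑' (k : ℕ), szasz n k x *
        ((n : ℝ) * ∫ t in Set.Ioi (0 : ℝ), szaszZ n ((k : ℤ) - j) t * f t)

/-- Membership in the class `E_A`: locally integrable on `[0,∞)` with exponential growth. -/
def MemE (A : ℝ) (f : ℝ → ℝ) : Prop :=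
  MeasureTheory.LocallyIntegrableOn f (Set.Ici 0) ∧
    ∃ K > 0, ∀ t ≥ (0 : ℝ), |f t| ≤ K * Real.exp (A * t)

/-- Falling factorial `a↓r = a(a-1)⋯(a-r+1)` for integer `a`. -/
def ffall (a : ℤ) (r : ℕ) : ℤ := ∏ i ∈ Finset.range r, (a - i)

open Set

lemma myexp_tsum (y : ℝ) : ∑' k : ℕ, y ^ k / (Nat.factorial k) = Real.exp y := by
  rw [Real.exp_eq_exp_ℝ, NormedSpace.exp_eq_tsum_div]

lemma mysummable0 (y : ℝ) : Summable (fun k : ℕ => y ^ k / (Nat.factorial k)) :=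
  Real.summable_pow_div_factorial y

lemma shift_eq (y : ℝ) : (fun k : ℕ => ((k+1 : ℕ) : ℝ) * y ^ (k+1) / (Nat.factorial (k+1)))
      = fun k : ℕ => y * (y ^ k / (Nat.factorial k)) := by
  funext k
  rw [Nat.factorial_succ]
  push_cast
  field_simp
  ring

lemma mysummable1 (y : ℝ) : Summable (fun k : ℕ => (k : ℝ) * y ^ k / (Nat.factorial k)) := by
  rw [← summable_nat_add_iff 1]
  exact (shift_eq y) ▸ ((mysummable0 y).mul_left y)

lemma mytsum1 (y : ℝ) : ∑' k : ℕ, (k : ℝ) * y ^ k / (Nat.factorial k) = y * Real.exp y := by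
  rw [Summable.tsum_eq_zero_add (mysummable1 y)]
  simp only [Nat.cast_zero, zero_mul, pow_zero, Nat.factorial_zero, zero_div, zero_add]
  calc (∑' k : ℕ, ((k+1 : ℕ) : ℝ) * y ^ (k+1) / (Nat.factorial (k+1)))
      = ∑' k : ℕ, y * (y ^ k / (Nat.factorial k)) := by rw [shift_eq]
    _ = y * Real.exp y := by rw [tsum_mul_left, myexp_tsum]

lemma shift_eq2 (y : ℝ) : (fun k : ℕ => (((k+1 : ℕ) : ℝ))^2 * y ^ (k+1) / (Nat.factorial (k+1)))
      = fun k : ℕ => y * ((k : ℝ) * y ^ k / (Nat.factorial k)) + y * (y ^ k / (Nat.factorial k)) := by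
  funext k
  rw [Nat.factorial_succ]
  push_cast
  field_simp
  ring

lemma mysummable2 (y : ℝ) : Summable (fun k : ℕ => ((k : ℝ))^2 * y ^ k / (Nat.factorial k)) := by
  rw [← summable_nat_add_iff 1]
  exact (shift_eq2 y) ▸ (((mysummable1 y).mul_left y).add ((mysummable0 y).mul_left y))

lemma mytsum2 (y : ℝ) : ∑' k : ℕ, ((k : ℝ))^2 * y ^ k / (Nat.factorial k) = (y^2 + y) * Real.exp y := by
  rw [Summable.tsum_eq_zero_add (mysummable2 y)]
  simp only [Nat.cast_zero, zero_pow, pow_zero, Nat.factorial_zero, zero_div, zero_add, ne_eq,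
    OfNat.ofNat_ne_zero, not_false_eq_true, zero_mul]
  calc (∑' k : ℕ, (((k+1 : ℕ) : ℝ))^2 * y ^ (k+1) / (Nat.factorial (k+1)))
      = ∑' k : ℕ, (y * ((k : ℝ) * y ^ k / (Nat.factorial k)) + y * (y ^ k / (Nat.factorial k))) := by
        rw [shift_eq2]
    _ = (y^2 + y) * Real.exp y := by
        rw [Summable.tsum_add (((mysummable1 y).mul_left y)) ((mysummable0 y).mul_left y),
          tsum_mul_left, tsum_mul_left, mytsum1, myexp_tsum]
        ring
open MeasureTheory Set

lemma my_integral_pow_exp (m : ℕ) {b : ℝ} (hb : 0 < b) :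
    ∫ t in Set.Ioi (0:ℝ), t ^ m * Real.exp (-(b * t)) = (Nat.factorial m) / b ^ (m+1) := by
  have h := Real.integral_rpow_mul_exp_neg_mul_Ioi (a := (m : ℝ) + 1) (r := b)
    (by positivity) hb
  rw [show ((m : ℝ) + 1 - 1) = (m : ℝ) by ring] at h
  simp only [Real.rpow_natCast] at h
  rw [h, show ((m : ℝ) + 1) = ((m + 1 : ℕ) : ℝ) by push_cast; ring, Real.rpow_natCast]
  push_cast
  rw [Real.Gamma_nat_eq_factorial]
  rw [one_div, inv_pow]
  field_simp

lemma my_integrableOn_pow_exp (m : ℕ) {b : ℝ} (hb : 0 < b) :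
    IntegrableOn (fun t => t ^ m * Real.exp (-(b * t))) (Set.Ioi (0:ℝ)) := by
  have h := Real.GammaIntegral_convergent (s := (m : ℝ) + 1) (by positivity)
  rw [show ((m:ℝ) + 1 - 1) = (m:ℝ) by ring] at h
  have h2 : IntegrableOn (fun t : ℝ => Real.exp (-(b*t)) * (b*t) ^ ((m:ℝ))) (Ioi 0) := by
    have := (integrableOn_Ioi_comp_mul_left_iff
      (fun u : ℝ => Real.exp (-u) * u ^ ((m:ℝ))) (c := 0) (a := b) hb).2 (by simpa using h)
    simpa using this
  have h3 : IntegrableOn (fun t : ℝ => Real.exp (-(b*t)) * (b^m * t ^ m)) (Ioi 0) :=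
    h2.congr_fun (fun t ht => by simp [Real.rpow_natCast, mul_pow]) measurableSet_Ioi
  exact MeasureTheory.IntegrableOn.congr_fun (h3.div_const (b ^ m))
    (fun t ht => by field_simp) measurableSet_Ioi


lemma szasz_nonneg (n k : ℕ) {x : ℝ} (hx : 0 ≤ x) : 0 ≤ szasz n k x := by
  unfold szasz; positivity

lemma szasz_mul_exp (n m : ℕ) (A t : ℝ) :
    szasz n m t * Real.exp (A * t) =
      (n:ℝ)^m / (Nat.factorial m) * (t ^ m * Real.exp (-(((n:ℝ) - A) * t))) := by
  have hexp : Real.exp (-(n:ℝ)*t) * Real.exp (A*t) = Real.exp (-(((n:ℝ) - A) * t)) := by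
    rw [← Real.exp_add]; congr 1; ring
  unfold szasz
  rw [mul_pow]
  linear_combination ((n:ℝ)^m * t^m / (Nat.factorial m)) * hexp

lemma kernel_integrable (n m r : ℕ) {A : ℝ} (hn : A < n) :
    IntegrableOn (fun t => szasz n m t * Real.exp (A * t) * t ^ r) (Set.Ioi (0:ℝ)) := by
  have hb : 0 < (n:ℝ) - A := by linarith
  have h := (my_integrableOn_pow_exp (m + r) hb).const_mul ((n:ℝ)^m / (Nat.factorial m))
  apply MeasureTheory.IntegrableOn.congr_fun h _ measurableSet_Ioi
  intro t ht
  simp only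
  rw [show szasz n m t * Real.exp (A * t) * t ^ r
      = (szasz n m t * Real.exp (A * t)) * t ^ r by ring, szasz_mul_exp n m A t, pow_add]
  ring

lemma kernel_integral (n m r : ℕ) {A : ℝ} (hn : A < n) :
    ∫ t in Set.Ioi (0:ℝ), szasz n m t * Real.exp (A * t) * t ^ r
      = (n:ℝ)^m / (Nat.factorial m) * ((Nat.factorial (m+r)) / ((n:ℝ) - A) ^ (m+r+1)) := by
  have hb : 0 < (n:ℝ) - A := by linarith
  have heq : ∀ t ∈ Set.Ioi (0:ℝ), szasz n m t * Real.exp (A * t) * t ^ r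
      = (n:ℝ)^m / (Nat.factorial m) * (t ^ (m+r) * Real.exp (-(((n:ℝ) - A) * t))) := by
    intro t ht
    rw [show szasz n m t * Real.exp (A * t) * t ^ r
      = (szasz n m t * Real.exp (A * t)) * t ^ r by ring, szasz_mul_exp n m A t, pow_add]
    ring
  rw [setIntegral_congr_fun measurableSet_Ioi heq, MeasureTheory.integral_const_mul,
    my_integral_pow_exp (m+r) hb]

lemma kernel_total (n m : ℕ) (hn : 0 < n) :
    (n:ℝ) * ∫ t in Set.Ioi (0:ℝ), szasz n m t = 1 := by
  have h := kernel_integral n m 0 (A := 0) (by exact_mod_cast hn)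
  simp only [mul_zero, zero_mul, Real.exp_zero, mul_one, pow_zero, add_zero, sub_zero] at h
  rw [h]
  have hn' : (0:ℝ) < n := by exact_mod_cast hn
  have hf : (0:ℝ) < (Nat.factorial m : ℝ) := by exact_mod_cast Nat.factorial_pos m
  field_simp
  ring

noncomputable def Iexpr (A x : ℝ) (n : ℕ) (m : ℕ) : ℝ :=
  ((n:ℝ)/((n:ℝ)-A))^(m+1) *
    ((((m:ℝ)+1)/((n:ℝ)-A) - x)^2 + ((m:ℝ)+1)/((n:ℝ)-A)^2)

lemma kernel_I (n m : ℕ) {A x : ℝ} (hn : A < n) :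
    (n:ℝ) * ∫ t in Set.Ioi (0:ℝ), szasz n m t * (Real.exp (A * t) * (t - x)^2)
      = Iexpr A x n m := by
  have hb : 0 < (n:ℝ) - A := by linarith
  have i2 := kernel_integrable n m 2 hn
  have i1 := kernel_integrable n m 1 hn
  have i0 := kernel_integrable n m 0 hn
  have hfe : (fun t : ℝ => szasz n m t * (Real.exp (A*t) * (t-x)^2))
      = fun t : ℝ => (szasz n m t * Real.exp (A*t) * t^2
          - (2*x) * (szasz n m t * Real.exp (A*t) * t^1))
          + (x^2) * (szasz n m t * Real.exp (A*t) * t^0) := by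
    funext t; ring
  rw [hfe, MeasureTheory.integral_add (by exact i2.sub (i1.const_mul (2*x)))
      (i0.const_mul (x^2)),
    MeasureTheory.integral_sub i2 (i1.const_mul (2*x)),
    MeasureTheory.integral_const_mul, MeasureTheory.integral_const_mul,
    kernel_integral n m 2 hn, kernel_integral n m 1 hn, kernel_integral n m 0 hn]
  unfold Iexpr
  have hf : (0:ℝ) < (Nat.factorial m : ℝ) := by exact_mod_cast Nat.factorial_pos m
  rw [show m + 2 = (m+1) + 1 by ring, Nat.factorial_succ ((m+1)), Nat.factorial_succ m]
  push_cast
  rw [div_pow]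
  field_simp
  ring

lemma szasz_continuous (n m : ℕ) : Continuous (fun t : ℝ => szasz n m t) := by
  unfold szasz
  fun_prop

lemma kernel_f_integrable (n m : ℕ) {A K : ℝ} (hn : A < n) {f : ℝ → ℝ}
    (hmeas : AEStronglyMeasurable f (volume.restrict (Set.Ioi 0)))
    (hK : ∀ t ≥ (0:ℝ), |f t| ≤ K * Real.exp (A * t)) :
    IntegrableOn (fun t => szasz n m t * f t) (Set.Ioi (0:ℝ)) := by
  have hb : 0 < (n:ℝ) - A := by linarith
  have hK0 : 0 ≤ K := by
    have := hK 0 le_rfl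
    have h2 : (0:ℝ) ≤ |f 0| := abs_nonneg _
    simp only [mul_zero, Real.exp_zero, mul_one] at this
    linarith
  apply MeasureTheory.Integrable.mono'
    ((my_integrableOn_pow_exp m hb).const_mul (K * (n:ℝ)^m / (Nat.factorial m)))
    (((szasz_continuous n m).aestronglyMeasurable.restrict).mul hmeas)
  rw [MeasureTheory.ae_restrict_iff' measurableSet_Ioi]
  filter_upwards with t ht
  have ht0 : 0 < t := ht
  have h1 : ‖szasz n m t * f t‖ = szasz n m t * |f t| := by
    rw [norm_mul, Real.norm_eq_abs, Real.norm_eq_abs,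
      abs_of_nonneg (szasz_nonneg n m ht0.le)]
  simp only [Pi.mul_apply]
  rw [h1]
  calc szasz n m t * |f t| ≤ szasz n m t * (K * Real.exp (A * t)) := by
        exact mul_le_mul_of_nonneg_left (hK t ht0.le) (szasz_nonneg n m ht0.le)
    _ = K * (n:ℝ)^m / (Nat.factorial m) * (t ^ m * Real.exp (-(((n:ℝ) - A) * t))) := by
        rw [show szasz n m t * (K * Real.exp (A * t)) = K * (szasz n m t * Real.exp (A*t)) by ring,
          szasz_mul_exp n m A t]
        ring

lemma kernel_f_bound (n m : ℕ) {A K : ℝ} (hn : A < n) {f : ℝ → ℝ}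
    (hK : ∀ t ≥ (0:ℝ), |f t| ≤ K * Real.exp (A * t)) :
    |∫ t in Set.Ioi (0:ℝ), szasz n m t * f t| ≤ K * (n:ℝ)^m / ((n:ℝ) - A)^(m+1) := by
  have hb : 0 < (n:ℝ) - A := by linarith
  have h1 : |∫ t in Set.Ioi (0:ℝ), szasz n m t * f t|
      ≤ ∫ t in Set.Ioi (0:ℝ), ‖szasz n m t * f t‖ := by
    rw [← Real.norm_eq_abs]
    exact MeasureTheory.norm_integral_le_integral_norm _
  have h2 : ∫ t in Set.Ioi (0:ℝ), ‖szasz n m t * f t‖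
      ≤ ∫ t in Set.Ioi (0:ℝ), szasz n m t * Real.exp (A * t) * K := by
    apply MeasureTheory.integral_mono_of_nonneg
    · filter_upwards with t; positivity
    · exact MeasureTheory.IntegrableOn.congr_fun ((kernel_integrable n m 0 hn).mul_const K)
        (fun t ht => by simp) measurableSet_Ioi
    · rw [Filter.EventuallyLE, MeasureTheory.ae_restrict_iff' measurableSet_Ioi]
      filter_upwards with t ht
      have ht0 : (0:ℝ) < t := ht
      rw [norm_mul, Real.norm_eq_abs, Real.norm_eq_abs,
        abs_of_nonneg (szasz_nonneg n m ht0.le)]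
      calc szasz n m t * |f t| ≤ szasz n m t * (K * Real.exp (A*t)) :=
            mul_le_mul_of_nonneg_left (hK t ht0.le) (szasz_nonneg n m ht0.le)
        _ = szasz n m t * Real.exp (A*t) * K := by ring
  have h3 : ∫ t in Set.Ioi (0:ℝ), szasz n m t * Real.exp (A * t) * K
      = (∫ t in Set.Ioi (0:ℝ), szasz n m t * Real.exp (A * t) * t ^ 0) * K := by
    rw [← MeasureTheory.integral_mul_const]
    apply setIntegral_congr_fun measurableSet_Ioi
    intro t ht
    simp
  rw [h3, kernel_integral n m 0 hn] at h2
  have hf : (0:ℝ) < (Nat.factorial m : ℝ) := by exact_mod_cast Nat.factorial_pos m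
  calc |∫ t in Set.Ioi (0:ℝ), szasz n m t * f t| ≤ _ := h1.trans h2
    _ = K * (n:ℝ)^m / ((n:ℝ) - A)^(m+1) := by
      rw [show m + 0 = m by ring]
      field_simp

lemma szasz_integrable (n m : ℕ) (hn0 : 0 < n) :
    IntegrableOn (fun t => szasz n m t) (Set.Ioi (0:ℝ)) := by
  have h := kernel_integrable n m 0 (A := 0) (by exact_mod_cast hn0)
  exact MeasureTheory.IntegrableOn.congr_fun h (fun t ht => by simp) measurableSet_Ioi

lemma kernel_I_integrable (n m : ℕ) {A x : ℝ} (hn : A < n) :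
    IntegrableOn (fun t => szasz n m t * (Real.exp (A * t) * (t - x)^2)) (Set.Ioi (0:ℝ)) := by
  have i2 := kernel_integrable n m 2 hn
  have i1 := kernel_integrable n m 1 hn
  have i0 := kernel_integrable n m 0 hn
  have h := (i2.sub (i1.const_mul (2*x))).add (i0.const_mul (x^2))
  exact MeasureTheory.IntegrableOn.congr_fun h (fun t ht => by simp only [Pi.add_apply, Pi.sub_apply]; ring) measurableSet_Ioi

lemma kernel_diff_bound (n m : ℕ) {A K x ε C : ℝ} (hn : A < n) (hn0 : 0 < n) {f : ℝ → ℝ}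
    (hmeas : AEStronglyMeasurable f (volume.restrict (Set.Ioi 0)))
    (hK : ∀ t ≥ (0:ℝ), |f t| ≤ K * Real.exp (A * t))
    (hεC : ∀ t ≥ (0:ℝ), |f t - f x| ≤ ε + C * (Real.exp (A * t) * (t - x)^2))
    (hε : 0 ≤ ε) (hC : 0 ≤ C) :
    |(n:ℝ) * (∫ t in Set.Ioi (0:ℝ), szasz n m t * f t) - f x| ≤ ε + C * Iexpr A x n m := by
  have htot := kernel_total n m hn0
  have hif := kernel_f_integrable n m hn hmeas hK
  have hic : IntegrableOn (fun t => szasz n m t * f x) (Set.Ioi (0:ℝ)) :=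
    (szasz_integrable n m hn0).mul_const (f x)
  have hstep : (n:ℝ) * (∫ t in Set.Ioi (0:ℝ), szasz n m t * f t) - f x
      = (n:ℝ) * ∫ t in Set.Ioi (0:ℝ), (szasz n m t * f t - szasz n m t * f x) := by
    rw [MeasureTheory.integral_sub hif hic, MeasureTheory.integral_mul_const]
    rw [mul_sub]
    congr 1
    rw [show (n:ℝ) * ((∫ t in Set.Ioi (0:ℝ), szasz n m t) * f x)
        = ((n:ℝ) * ∫ t in Set.Ioi (0:ℝ), szasz n m t) * f x by ring, htot, one_mul]
  rw [hstep, abs_mul, abs_of_nonneg (by positivity : (0:ℝ) ≤ (n:ℝ))]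
  have hbd : |∫ t in Set.Ioi (0:ℝ), (szasz n m t * f t - szasz n m t * f x)|
      ≤ ∫ t in Set.Ioi (0:ℝ), (szasz n m t * ε + C * (szasz n m t * (Real.exp (A*t) * (t-x)^2))) := by
    rw [← Real.norm_eq_abs]
    refine (MeasureTheory.norm_integral_le_integral_norm _).trans ?_
    apply MeasureTheory.integral_mono_of_nonneg
    · filter_upwards with t; positivity
    · exact ((szasz_integrable n m hn0).mul_const ε).add
        ((kernel_I_integrable n m hn).const_mul C)
    · rw [Filter.EventuallyLE, MeasureTheory.ae_restrict_iff' measurableSet_Ioi]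
      filter_upwards with t ht
      have ht0 : (0:ℝ) < t := ht
      have hs := szasz_nonneg n m ht0.le
      calc ‖szasz n m t * f t - szasz n m t * f x‖
          = szasz n m t * |f t - f x| := by
            rw [show szasz n m t * f t - szasz n m t * f x = szasz n m t * (f t - f x) by ring,
              Real.norm_eq_abs, abs_mul, abs_of_nonneg hs]
        _ ≤ szasz n m t * (ε + C * (Real.exp (A * t) * (t - x)^2)) :=
            mul_le_mul_of_nonneg_left (hεC t ht0.le) hs
        _ = szasz n m t * ε + C * (szasz n m t * (Real.exp (A*t) * (t-x)^2)) := by ring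
  have hsplit : ∫ t in Set.Ioi (0:ℝ), (szasz n m t * ε + C * (szasz n m t * (Real.exp (A*t) * (t-x)^2)))
      = (∫ t in Set.Ioi (0:ℝ), szasz n m t) * ε
        + C * ∫ t in Set.Ioi (0:ℝ), szasz n m t * (Real.exp (A*t) * (t-x)^2) := by
    rw [MeasureTheory.integral_add ((szasz_integrable n m hn0).mul_const ε)
      ((kernel_I_integrable n m hn).const_mul C), MeasureTheory.integral_mul_const,
      MeasureTheory.integral_const_mul]
  have habs : |∫ t in Set.Ioi (0:ℝ), (szasz n m t * f t - szasz n m t * f x)|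
      ≤ (∫ t in Set.Ioi (0:ℝ), szasz n m t) * ε
        + C * ∫ t in Set.Ioi (0:ℝ), szasz n m t * (Real.exp (A*t) * (t-x)^2) := by
    rw [← hsplit]; exact hbd
  calc (n:ℝ) * |∫ t in Set.Ioi (0:ℝ), (szasz n m t * f t - szasz n m t * f x)|
      ≤ (n:ℝ) * ((∫ t in Set.Ioi (0:ℝ), szasz n m t) * ε
        + C * ∫ t in Set.Ioi (0:ℝ), szasz n m t * (Real.exp (A*t) * (t-x)^2)) :=
        mul_le_mul_of_nonneg_left habs (by positivity)
    _ = ((n:ℝ) * ∫ t in Set.Ioi (0:ℝ), szasz n m t) * ε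
        + C * ((n:ℝ) * ∫ t in Set.Ioi (0:ℝ), szasz n m t * (Real.exp (A*t) * (t-x)^2)) := by ring
    _ = ε + C * Iexpr A x n m := by rw [htot, one_mul, kernel_I n m hn]

lemma szasz_eq (n k : ℕ) (x : ℝ) :
    szasz n k x = Real.exp (-(n:ℝ)*x) * (((n:ℝ)*x) ^ k / (Nat.factorial k)) := by
  unfold szasz; ring

lemma szasz_summable (n : ℕ) (x : ℝ) : Summable (fun k : ℕ => szasz n k x) := by
  simp only [szasz_eq]
  exact (mysummable0 ((n:ℝ)*x)).mul_left _

lemma szasz_tsum (n : ℕ) (x : ℝ) : ∑' k : ℕ, szasz n k x = 1 := by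
  simp only [szasz_eq]
  rw [tsum_mul_left, myexp_tsum, ← Real.exp_add]
  simp

/-- The quadratic-weight series used to dominate the variance term. -/
noncomputable def Wfun (μ b x c₂ : ℝ) (k : ℕ) : ℝ :=
  μ^k / (Nat.factorial k) * (2*((k:ℝ)/b - x)^2 + c₂*((k:ℝ)+1)/b^2)

lemma Wfun_expand (μ b x c₂ : ℝ) (hb : b ≠ 0) :
    Wfun μ b x c₂ = fun k : ℕ =>
      (2/b^2) * ((k:ℝ)^2 * μ^k / (Nat.factorial k))
      + ((-(4*x)/b + c₂/b^2) * ((k:ℝ) * μ^k / (Nat.factorial k))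
      + (2*x^2 + c₂/b^2) * (μ^k / (Nat.factorial k))) := by
  funext k
  unfold Wfun
  field_simp
  ring

lemma Wfun_summable (μ b x c₂ : ℝ) (hb : b ≠ 0) : Summable (Wfun μ b x c₂) := by
  rw [Wfun_expand μ b x c₂ hb]
  exact ((mysummable2 μ).mul_left _).add
    (((mysummable1 μ).mul_left _).add ((mysummable0 μ).mul_left _))

lemma Wfun_tsum (μ b x c₂ : ℝ) (hb : b ≠ 0) :
    ∑' k, Wfun μ b x c₂ k
      = Real.exp μ * (2*(μ - b*x)^2 + 2*μ + c₂*(μ+1)) / b^2 := by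
  rw [Wfun_expand μ b x c₂ hb]
  rw [Summable.tsum_add ((mysummable2 μ).mul_left _)
    (((mysummable1 μ).mul_left _).add ((mysummable0 μ).mul_left _)),
    Summable.tsum_add ((mysummable1 μ).mul_left _) ((mysummable0 μ).mul_left _),
    tsum_mul_left, tsum_mul_left, tsum_mul_left, mytsum2, mytsum1, myexp_tsum]
  field_simp
  ring

lemma Wfun_nonneg {μ b x c₂ : ℝ} (hμ : 0 ≤ μ) (hc : 0 ≤ c₂) (k : ℕ) :
    0 ≤ Wfun μ b x c₂ k := by
  unfold Wfun
  have h1 : (0:ℝ) ≤ μ^k / (Nat.factorial k) := by positivity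
  have h2 : (0:ℝ) ≤ 2*((k:ℝ)/b - x)^2 + c₂*((k:ℝ)+1)/b^2 := by positivity
  exact mul_nonneg h1 h2

lemma Wfun_tail_le (μ b x c₂ : ℝ) (hb : b ≠ 0) (hμ : 0 ≤ μ) (hc : 0 ≤ c₂) (d : ℕ) :
    ∑' i : ℕ, Wfun μ b x c₂ (i + d) ≤ ∑' k, Wfun μ b x c₂ k := by
  have hs := Wfun_summable μ b x c₂ hb
  rw [← Summable.sum_add_tsum_nat_add d hs]
  have : 0 ≤ ∑ i ∈ Finset.range d, Wfun μ b x c₂ i :=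
    Finset.sum_nonneg (fun i _ => Wfun_nonneg hμ hc i)
  linarith

lemma Wfun_tail_summable (μ b x c₂ : ℝ) (hb : b ≠ 0) (d : ℕ) :
    Summable (fun i : ℕ => Wfun μ b x c₂ (i + d)) :=
  (summable_nat_add_iff d).2 (Wfun_summable μ b x c₂ hb)

lemma Iexpr_nonneg {A x : ℝ} {n : ℕ} (hn : A < n) (m : ℕ) : 0 ≤ Iexpr A x n m := by
  have hb : 0 < (n:ℝ) - A := by linarith
  unfold Iexpr
  positivity

lemma term_le (d e : ℕ) {A x : ℝ} (hA : 0 ≤ A) (hx : 0 < x) {n : ℕ} (hn : A < n) (i : ℕ) :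
    szasz n (i+d) x * Iexpr A x n (i+e)
      ≤ Real.exp (-((n:ℝ)*x)) * ((n:ℝ)/((n:ℝ)-A))^(e+1)
        * Wfun ((n:ℝ)*x*((n:ℝ)/((n:ℝ)-A))) ((n:ℝ)-A) x
            (2*((e:ℝ)+(d:ℝ)+1)^2 + (e:ℝ) + 1) (i+d) := by
  have hb : 0 < (n:ℝ) - A := by linarith
  have hn0 : (0:ℝ) < n := by linarith
  have hx0 : 0 ≤ x := hx.le
  set E : ℝ := (e:ℝ) with hEdef
  set D : ℝ := (d:ℝ) with hDdef
  set I : ℝ := (i:ℝ) with hIdef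
  have hE : 0 ≤ E := Nat.cast_nonneg e
  have hD : 0 ≤ D := Nat.cast_nonneg d
  have hI : 0 ≤ I := Nat.cast_nonneg i
  set b : ℝ := (n:ℝ) - A with hbdef
  set q : ℝ := (n:ℝ)/b with hqdef
  have hq1 : 1 ≤ q := by
    rw [hqdef, le_div_iff₀ hb]
    linarith
  have hq0 : (0:ℝ) ≤ q := by linarith
  set lam : ℝ := (n:ℝ)*x with hlamdef
  have hlam0 : 0 ≤ lam := by positivity
  set c₂ : ℝ := 2*(E+D+1)^2 + E + 1 with hc2def
  set K : ℝ := I + D with hKdef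
  set r : ℝ := I + E + 1 with hrdef
  set y : ℝ := b * x with hydef
  have core : (r - y)^2 + r ≤ 2*(K - y)^2 + c₂*(K+1) := by
    rw [hc2def, hKdef, hrdef]
    nlinarith [sq_nonneg ((I + D - y) - (E + 1 - D)), mul_nonneg hD (by linarith : (0:ℝ) ≤ E + 1),
      mul_nonneg hE hI, mul_nonneg (sq_nonneg (E+D+1)) hI, mul_nonneg (sq_nonneg (E+D+1)) hD,
      mul_nonneg hI hD, sq_nonneg (E+D+1)]
  have hle1 : ((I+E+1)/b - x)^2 + (I+E+1)/b^2 ≤ 2*(K/b - x)^2 + c₂*(K+1)/b^2 := by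
    have e1 : ((I+E+1)/b - x)^2 + (I+E+1)/b^2 = ((r - y)^2 + r)/b^2 := by
      rw [hrdef, hydef]; field_simp
    have e2 : 2*(K/b - x)^2 + c₂*(K+1)/b^2 = (2*(K - y)^2 + c₂*(K+1))/b^2 := by
      rw [hydef]; field_simp
    rw [e1, e2]
    gcongr
  have hpow : q^(i+e+1) ≤ q^(i+d+(e+1)) := pow_le_pow_right₀ hq1 (by omega)
  have hP : (0:ℝ) ≤ Real.exp (-lam) * lam^(i+d) / (Nat.factorial (i+d)) := by positivity
  have cast1 : ((i+e:ℕ):ℝ) = I + E := by push_cast [hIdef, hEdef]; ring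
  have cast2 : ((i+d:ℕ):ℝ) = K := by rw [hKdef]; push_cast [hIdef, hDdef]; ring
  have hszasz : szasz n (i+d) x = Real.exp (-lam) * lam^(i+d) / (Nat.factorial (i+d)) := by
    unfold szasz
    rw [hlamdef, neg_mul]
  have hIexpr : Iexpr A x n (i+e)
      = q^((i+e)+1) * (((I+E+1)/b - x)^2 + (I+E+1)/b^2) := by
    unfold Iexpr
    rw [← hbdef, ← hqdef, cast1]
  calc szasz n (i+d) x * Iexpr A x n (i+e)
      = (Real.exp (-lam) * lam^(i+d) / (Nat.factorial (i+d)))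
        * (q^(i+e+1) * (((I+E+1)/b - x)^2 + (I+E+1)/b^2)) := by
        rw [hszasz, hIexpr]
    _ ≤ (Real.exp (-lam) * lam^(i+d) / (Nat.factorial (i+d)))
        * (q^(i+d+(e+1)) * (2*(K/b - x)^2 + c₂*(K+1)/b^2)) := by
        apply mul_le_mul_of_nonneg_left _ hP
        apply mul_le_mul hpow hle1 (by positivity) (by positivity)
    _ = Real.exp (-lam) * q^(e+1)
        * Wfun (lam*q) b x c₂ (i+d) := by
        unfold Wfun
        rw [cast2, mul_pow, pow_add]
        ring

lemma T_summable (d e : ℕ) {A x : ℝ} (hA : 0 ≤ A) (hx : 0 < x) {n : ℕ} (hn : A < n) :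
    Summable (fun i : ℕ => szasz n (i+d) x * Iexpr A x n (i+e)) := by
  have hb : 0 < (n:ℝ) - A := by linarith
  apply Summable.of_nonneg_of_le
    (fun i => mul_nonneg (szasz_nonneg _ _ hx.le) (Iexpr_nonneg hn _))
    (term_le d e hA hx hn)
  exact (Wfun_tail_summable _ _ _ _ hb.ne' d).mul_left _

lemma T_le (d e : ℕ) {A x : ℝ} (hA : 0 ≤ A) (hx : 0 < x) {n : ℕ} (hn : A < n) :
    ∑' i : ℕ, szasz n (i+d) x * Iexpr A x n (i+e)
      ≤ Real.exp (-((n:ℝ)*x)) * ((n:ℝ)/((n:ℝ)-A))^(e+1)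
        * (Real.exp ((n:ℝ)*x*((n:ℝ)/((n:ℝ)-A)))
          * (2*((n:ℝ)*x*((n:ℝ)/((n:ℝ)-A)) - ((n:ℝ)-A)*x)^2
            + 2*((n:ℝ)*x*((n:ℝ)/((n:ℝ)-A)))
            + (2*((e:ℝ)+(d:ℝ)+1)^2 + (e:ℝ) + 1) * ((n:ℝ)*x*((n:ℝ)/((n:ℝ)-A))+1))
          / ((n:ℝ)-A)^2) := by
  have hb : 0 < (n:ℝ) - A := by linarith
  have hc2 : (0:ℝ) ≤ 2*((e:ℝ)+(d:ℝ)+1)^2 + (e:ℝ) + 1 := by positivity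
  have hq0 : (0:ℝ) ≤ (n:ℝ)/((n:ℝ)-A) := by positivity
  have hμ0 : (0:ℝ) ≤ (n:ℝ)*x*((n:ℝ)/((n:ℝ)-A)) := by positivity
  have hpre : (0:ℝ) ≤ Real.exp (-((n:ℝ)*x)) * ((n:ℝ)/((n:ℝ)-A))^(e+1) := by positivity
  calc ∑' i : ℕ, szasz n (i+d) x * Iexpr A x n (i+e)
      ≤ ∑' i : ℕ, Real.exp (-((n:ℝ)*x)) * ((n:ℝ)/((n:ℝ)-A))^(e+1)
          * Wfun ((n:ℝ)*x*((n:ℝ)/((n:ℝ)-A))) ((n:ℝ)-A) x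
              (2*((e:ℝ)+(d:ℝ)+1)^2 + (e:ℝ) + 1) (i+d) := by
        apply Summable.tsum_le_tsum (term_le d e hA hx hn) (T_summable d e hA hx hn)
        exact (Wfun_tail_summable _ _ _ _ hb.ne' d).mul_left _
    _ = Real.exp (-((n:ℝ)*x)) * ((n:ℝ)/((n:ℝ)-A))^(e+1)
          * ∑' i : ℕ, Wfun ((n:ℝ)*x*((n:ℝ)/((n:ℝ)-A))) ((n:ℝ)-A) x
              (2*((e:ℝ)+(d:ℝ)+1)^2 + (e:ℝ) + 1) (i+d) := by
        rw [← tsum_mul_left]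
    _ ≤ Real.exp (-((n:ℝ)*x)) * ((n:ℝ)/((n:ℝ)-A))^(e+1)
          * ∑' k : ℕ, Wfun ((n:ℝ)*x*((n:ℝ)/((n:ℝ)-A))) ((n:ℝ)-A) x
              (2*((e:ℝ)+(d:ℝ)+1)^2 + (e:ℝ) + 1) k :=
        mul_le_mul_of_nonneg_left (Wfun_tail_le _ _ _ _ hb.ne' hμ0 hc2 d) hpre
    _ = _ := by
        rw [Wfun_tsum _ _ _ _ hb.ne']

set_option maxHeartbeats 1600000 in
lemma T_tendsto (d e : ℕ) {A x : ℝ} (hA : 0 ≤ A) (hx : 0 < x) :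
    Tendsto (fun n : ℕ => ∑' i : ℕ, szasz n (i+d) x * Iexpr A x n (i+e))
      atTop (nhds 0) := by
  set c₂ : ℝ := 2*((e:ℝ)+(d:ℝ)+1)^2 + (e:ℝ) + 1 with hc2def
  have hc2 : (0:ℝ) ≤ c₂ := by positivity
  set C₀ : ℝ := 18*A^2*x^2 + 4*x + 2*c₂*x + c₂ with hC0def
  have hC00 : (0:ℝ) ≤ C₀ := by positivity
  set C₁ : ℝ := 4 * Real.exp (2*A*x) * 2^(e+1) * C₀ with hC1def
  obtain ⟨N₀, hN₀⟩ := exists_nat_gt (2*A + 1)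
  have hev : ∀ n : ℕ, N₀ ≤ n → (2*A + 1 ≤ (n:ℝ)) := by
    intro n hn
    have : (N₀:ℝ) ≤ (n:ℝ) := by exact_mod_cast hn
    linarith
  apply squeeze_zero' (g := fun n : ℕ => C₁ * (1/(n:ℝ)))
  · filter_upwards [eventually_ge_atTop N₀] with n hn
    have hn' := hev n hn
    have hAn : A < (n:ℝ) := by linarith
    exact tsum_nonneg (fun i => mul_nonneg (szasz_nonneg _ _ hx.le) (Iexpr_nonneg hAn _))
  · filter_upwards [eventually_ge_atTop N₀] with n hn
    have hn' := hev n hn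
    have hAn : A < (n:ℝ) := by linarith
    have hn1 : (1:ℝ) ≤ (n:ℝ) := by linarith
    have hn0 : (0:ℝ) < (n:ℝ) := by linarith
    have hb : (0:ℝ) < (n:ℝ) - A := by linarith
    set b : ℝ := (n:ℝ) - A with hbdef
    set q : ℝ := (n:ℝ)/b with hqdef
    set μ : ℝ := (n:ℝ)*x*q with hμdef
    have hq0 : (0:ℝ) ≤ q := by positivity
    have hq2 : q ≤ 2 := by
      rw [hqdef, div_le_iff₀ hb]
      linarith
    have hμ0 : (0:ℝ) ≤ μ := by positivity
    have hq1 : 1 ≤ q := by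
      rw [hqdef, le_div_iff₀ hb]
      linarith
    have hμ2nx : μ ≤ 2*(n:ℝ)*x := by
      rw [hμdef]
      nlinarith [mul_nonneg (mul_nonneg hn0.le hx.le) (by linarith : (0:ℝ) ≤ 2 - q)]
    have hb2 : (n:ℝ)/2 ≤ b := by rw [hbdef]; linarith
    -- bound on μ - b x
    have hμbx0 : 0 ≤ μ - b*x := by
      rw [hμdef, hbdef]
      nlinarith [mul_nonneg (mul_nonneg hn0.le hx.le) (by linarith : (0:ℝ) ≤ q - 1),
        mul_nonneg hA hx.le]
    have hμbx : μ - b*x ≤ 3*A*x := by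
      have hqb : (n:ℝ)*q = (n:ℝ)^2/b := by rw [hqdef]; field_simp
      have : μ - b*x = x * (((n:ℝ)^2 - b^2)/b) := by
        rw [hμdef, hqdef]; field_simp
      rw [this]
      have h2 : ((n:ℝ)^2 - b^2)/b = A * (((n:ℝ) + b)/b) := by
        rw [hbdef]; field_simp; ring
      rw [h2]
      have h3 : ((n:ℝ) + b)/b ≤ 3 := by
        rw [div_le_iff₀ hb]
        have : (n:ℝ) ≤ 2*b := by rw [hbdef]; linarith
        linarith
      calc x * (A * (((n:ℝ) + b)/b)) ≤ x * (A * 3) := by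
            apply mul_le_mul_of_nonneg_left _ hx.le
            exact mul_le_mul_of_nonneg_left h3 hA
        _ = 3*A*x := by ring
    have hml : μ - (n:ℝ)*x ≤ 2*A*x := by
      have : μ - (n:ℝ)*x = (n:ℝ)*x*(q - 1) := by rw [hμdef]; ring
      rw [this]
      have hq1' : q - 1 = A/b := by rw [hqdef, div_sub_one hb.ne', hbdef]; ring
      rw [hq1']
      have h4 : (n:ℝ)*x*(A/b) = ((n:ℝ)/b) * (A*x) := by field_simp
      rw [h4]
      have h5 : (n:ℝ)/b ≤ 2 := hq2
      nlinarith [mul_nonneg hA hx.le]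
    -- numerator bound
    set N : ℝ := 2*(μ - b*x)^2 + 2*μ + c₂*(μ+1) with hNdef
    have hN0 : 0 ≤ N := by rw [hNdef]; positivity
    have hNle : N ≤ (n:ℝ) * C₀ := by
      rw [hNdef, hC0def]
      have h6 : (μ - b*x)^2 ≤ 9*A^2*x^2 := by nlinarith
      nlinarith [mul_nonneg hc2 hx.le, mul_nonneg (mul_nonneg hc2 hx.le) (by linarith : (0:ℝ) ≤ (n:ℝ) - 1),
        mul_nonneg hc2 (by linarith : (0:ℝ) ≤ (n:ℝ) - 1),
        mul_nonneg (mul_nonneg (by norm_num : (0:ℝ) ≤ 18) (sq_nonneg A)) (sq_nonneg x)]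
    have hbinv : 1/b^2 ≤ 4/(n:ℝ)^2 := by
      rw [div_le_div_iff₀ (by positivity) (by positivity)]
      nlinarith
    -- apply T_le
    have hTle := T_le d e hA hx (n := n) hAn
    rw [← hbdef, ← hqdef, ← hμdef, ← hc2def] at hTle
    have hrw : Real.exp (-((n:ℝ)*x)) * q^(e+1) * (Real.exp μ * N / b^2)
        = Real.exp (μ - (n:ℝ)*x) * (q^(e+1) * (N * (1/b^2))) := by
      rw [Real.exp_sub, Real.exp_neg]
      field_simp
    have hTle' : ∑' i : ℕ, szasz n (i+d) x * Iexpr A x n (i+e)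
        ≤ Real.exp (μ - (n:ℝ)*x) * (q^(e+1) * (N * (1/b^2))) := by
      rw [← hrw]
      convert hTle using 3
    have hstep : Real.exp (μ - (n:ℝ)*x) * (q^(e+1) * (N * (1/b^2)))
        ≤ Real.exp (2*A*x) * (2^(e+1) * (((n:ℝ)*C₀) * (4/(n:ℝ)^2))) := by
      have f1 : Real.exp (μ - (n:ℝ)*x) ≤ Real.exp (2*A*x) := Real.exp_le_exp.2 hml
      have f2 : q^(e+1) ≤ 2^(e+1) := pow_le_pow_left₀ hq0 hq2 _
      have f3 : N * (1/b^2) ≤ ((n:ℝ)*C₀) * (4/(n:ℝ)^2) :=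
        mul_le_mul hNle hbinv (by positivity) (by positivity)
      have g1 : 0 ≤ Real.exp (μ - (n:ℝ)*x) := (Real.exp_pos _).le
      have g2 : (0:ℝ) ≤ q^(e+1) := by positivity
      have g3 : 0 ≤ N * (1/b^2) := by positivity
      have g4 : (0:ℝ) ≤ (2:ℝ)^(e+1) := by positivity
      have g5 : (0:ℝ) ≤ ((n:ℝ)*C₀) * (4/(n:ℝ)^2) := by positivity
      exact mul_le_mul f1 (mul_le_mul f2 f3 g3 g4) (mul_nonneg g2 g3) (Real.exp_pos _).le
    have hfinal : Real.exp (2*A*x) * (2^(e+1) * (((n:ℝ)*C₀) * (4/(n:ℝ)^2)))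
        = C₁ * (1/(n:ℝ)) := by
      rw [hC1def]
      field_simp
    linarith [hTle'.trans hstep]
  · have h := tendsto_one_div_atTop_nhds_zero_nat.const_mul C₁
    simpa using h

lemma F_tendsto (d : ℕ) {x : ℝ} (hx : 0 < x) :
    Tendsto (fun n : ℕ => ∑ k ∈ Finset.range d, szasz n k x) atTop (nhds 0) := by
  have h0 : Tendsto (fun n : ℕ => (n:ℝ) * x) atTop atTop :=
    (tendsto_natCast_atTop_atTop).atTop_mul_const hx
  have hterm : ∀ k : ℕ, Tendsto (fun n : ℕ => szasz n k x) atTop (nhds 0) := by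
    intro k
    have h1 := (tendsto_pow_mul_exp_neg_atTop_nhds_zero k).comp h0
    have h2 := h1.div_const (Nat.factorial k : ℝ)
    simp only [zero_div] at h2
    convert h2 using 2 with n
    unfold szasz
    simp only [Function.comp_apply, neg_mul]
    ring
  have := tendsto_finset_sum (Finset.range d) (fun k _ => hterm k)
  simpa using this



set_option maxHeartbeats 1600000 in
lemma assembly {A K x ε' C : ℝ} (hA : 0 ≤ A) (hx : 0 < x) (j : ℤ) {n : ℕ}
    (hn : A < n) (hn0 : 0 < n) {f : ℝ → ℝ}
    (hmeas : AEStronglyMeasurable f (volume.restrict (Set.Ioi 0)))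
    (hK : ∀ t ≥ (0:ℝ), |f t| ≤ K * Real.exp (A * t))
    (hεC : ∀ t ≥ (0:ℝ), |f t - f x| ≤ ε' + C * (Real.exp (A * t) * (t - x)^2))
    (hε : 0 ≤ ε') (hC : 0 ≤ C) :
    |Sop n j f x - f x| ≤ |f 0 - f x| * (∑ k ∈ Finset.range j.toNat, szasz n k x)
      + ε' + C * ∑' i : ℕ, szasz n (i + j.toNat) x * Iexpr A x n (i + (-j).toNat) := by
  set d : ℕ := j.toNat with hd
  set e : ℕ := (-j).toNat with he
  have hb : (0:ℝ) < (n:ℝ) - A := by linarith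
  have hq1 : (1:ℝ) ≤ (n:ℝ)/((n:ℝ)-A) := by
    rw [le_div_iff₀ hb]; linarith
  have hq0 : (0:ℝ) ≤ (n:ℝ)/((n:ℝ)-A) := by linarith
  have hK0 : 0 ≤ K := by
    have := hK 0 le_rfl
    have h2 : (0:ℝ) ≤ |f 0| := abs_nonneg _
    simp only [mul_zero, Real.exp_zero, mul_one] at this
    linarith
  set u : ℕ → ℝ := fun k => szasz n k x *
      ((n : ℝ) * ∫ t in Set.Ioi (0 : ℝ), szaszZ n ((k : ℤ) - j) t * f t) with hu_def
  -- vanishing below d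
  have hu_zero : ∀ k ∈ Finset.range d, u k = 0 := by
    intro k hk
    rw [Finset.mem_range] at hk
    have hneg : ¬ (0 ≤ (k:ℤ) - j) := by omega
    have : ∀ t : ℝ, szaszZ n ((k:ℤ) - j) t * f t = 0 := by
      intro t
      unfold szaszZ
      rw [if_neg hneg, zero_mul]
    simp only [hu_def, this, MeasureTheory.integral_zero, mul_zero]
  -- shifted form
  have hu_shift : ∀ i : ℕ, u (i+d) = szasz n (i+d) x *
      ((n : ℝ) * ∫ t in Set.Ioi (0 : ℝ), szasz n (i+e) t * f t) := by
    intro i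
    have hpos : 0 ≤ ((i+d:ℕ):ℤ) - j := by omega
    have htn : (((i+d:ℕ):ℤ) - j).toNat = i + e := by omega
    have : ∀ t : ℝ, szaszZ n (((i+d:ℕ):ℤ) - j) t = szasz n (i+e) t := by
      intro t
      unfold szaszZ
      rw [if_pos hpos, htn]
    simp only [hu_def, this]
  -- summability of u
  have hBsum : Summable (fun k : ℕ => szasz n k x
      * (K * ((n:ℝ)/((n:ℝ)-A))^(k+e+1))) := by
    have hs : Summable (fun k : ℕ =>
        (K * ((n:ℝ)/((n:ℝ)-A))^(e+1) * Real.exp (-((n:ℝ)*x)))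
          * (((n:ℝ)*x*((n:ℝ)/((n:ℝ)-A)))^k / (Nat.factorial k))) :=
      (mysummable0 _).mul_left _
    apply hs.congr
    intro k
    rw [szasz_eq]
    rw [mul_pow, pow_add, neg_mul]
    ring
  have hu_bound : ∀ k : ℕ, ‖u k‖ ≤ szasz n k x * (K * ((n:ℝ)/((n:ℝ)-A))^(k+e+1)) := by
    intro k
    by_cases hkd : k < d
    · rw [show u k = 0 from hu_zero k (Finset.mem_range.2 hkd), norm_zero]
      exact mul_nonneg (szasz_nonneg n k hx.le) (by positivity)
    · push_neg at hkd
      have hpos : 0 ≤ (k:ℤ) - j := by omega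
      set m : ℕ := ((k:ℤ) - j).toNat with hm
      have hme : m ≤ k + e := by omega
      have hzeq : ∀ t : ℝ, szaszZ n ((k:ℤ) - j) t = szasz n m t := by
        intro t
        unfold szaszZ
        rw [if_pos hpos]
      have : u k = szasz n k x * ((n:ℝ) * ∫ t in Set.Ioi (0:ℝ), szasz n m t * f t) := by
        simp only [hu_def, hzeq]
      rw [this]
      rw [Real.norm_eq_abs, abs_mul, abs_mul,
        abs_of_nonneg (szasz_nonneg n k hx.le),
        abs_of_nonneg (by positivity : (0:ℝ) ≤ (n:ℝ))]
      have h1 := kernel_f_bound n m hn hK (f := f)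
      have h2 : (n:ℝ) * |∫ t in Set.Ioi (0:ℝ), szasz n m t * f t|
          ≤ (n:ℝ) * (K * (n:ℝ)^m / ((n:ℝ) - A)^(m+1)) :=
        mul_le_mul_of_nonneg_left h1 (by positivity)
      have h3 : (n:ℝ) * (K * (n:ℝ)^m / ((n:ℝ) - A)^(m+1))
          = K * ((n:ℝ)/((n:ℝ)-A))^(m+1) := by
        rw [div_pow]
        field_simp
        ring
      have h4 : K * ((n:ℝ)/((n:ℝ)-A))^(m+1) ≤ K * ((n:ℝ)/((n:ℝ)-A))^(k+e+1) := by
        apply mul_le_mul_of_nonneg_left _ hK0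
        exact pow_le_pow_right₀ hq1 (by omega)
      have h5 : (n:ℝ) * |∫ t in Set.Ioi (0:ℝ), szasz n m t * f t|
          ≤ K * ((n:ℝ)/((n:ℝ)-A))^(k+e+1) := by
        rw [h3] at h2
        linarith
      exact mul_le_mul_of_nonneg_left h5 (szasz_nonneg n k hx.le)
  have hu : Summable u := Summable.of_norm_bounded hBsum hu_bound
  have hu_shift_sum : Summable (fun i : ℕ => u (i + d)) := (summable_nat_add_iff d).2 hu
  have hsz : Summable (fun k : ℕ => szasz n k x) := szasz_summable n x
  have hsz_shift : Summable (fun i : ℕ => szasz n (i+d) x) := (summable_nat_add_iff d).2 hsz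
  -- tsum decomposition
  have h1 : ∑' k, u k = ∑' i : ℕ, u (i+d) := by
    rw [← Summable.sum_add_tsum_nat_add d hu, Finset.sum_eq_zero hu_zero, zero_add]
  have h2 : (1:ℝ) = (∑ k ∈ Finset.range d, szasz n k x) + ∑' i : ℕ, szasz n (i+d) x := by
    rw [← szasz_tsum n x, ← Summable.sum_add_tsum_nat_add d hsz]
  set F : ℝ := ∑ k ∈ Finset.range d, szasz n k x with hF
  have hF0 : 0 ≤ F := Finset.sum_nonneg (fun k _ => szasz_nonneg n k hx.le)
  have hident : Sop n j f x - f x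
      = (f 0 - f x) * F + ∑' i : ℕ, (u (i+d) - f x * szasz n (i+d) x) := by
    have : Sop n j f x = f 0 * F + ∑' k, u k := rfl
    rw [this, h1]
    rw [Summable.tsum_sub hu_shift_sum (hsz_shift.mul_left (f x)), tsum_mul_left]
    have hfx : f x = f x * F + f x * ∑' i : ℕ, szasz n (i+d) x := by
      nth_rewrite 1 [show f x = f x * 1 by ring]
      rw [h2]
      ring
    nth_rewrite 1 [hfx]
    ring
  -- per-term bound
  have hterm : ∀ i : ℕ, |u (i+d) - f x * szasz n (i+d) x|
      ≤ szasz n (i+d) x * (ε' + C * Iexpr A x n (i+e)) := by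
    intro i
    rw [hu_shift i]
    have : szasz n (i+d) x * ((n:ℝ) * ∫ t in Set.Ioi (0:ℝ), szasz n (i+e) t * f t)
        - f x * szasz n (i+d) x
        = szasz n (i+d) x * (((n:ℝ) * ∫ t in Set.Ioi (0:ℝ), szasz n (i+e) t * f t) - f x) := by
      ring
    rw [this, abs_mul, abs_of_nonneg (szasz_nonneg n (i+d) hx.le)]
    exact mul_le_mul_of_nonneg_left
      (kernel_diff_bound n (i+e) hn hn0 hmeas hK hεC hε hC)
      (szasz_nonneg n (i+d) hx.le)
  -- summability of the dominating series
  have hTsum : Summable (fun i : ℕ => szasz n (i+d) x * Iexpr A x n (i+e)) :=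
    T_summable d e hA hx hn
  have hdom : Summable (fun i : ℕ => szasz n (i+d) x * (ε' + C * Iexpr A x n (i+e))) := by
    have : (fun i : ℕ => szasz n (i+d) x * (ε' + C * Iexpr A x n (i+e)))
        = fun i : ℕ => ε' * szasz n (i+d) x + C * (szasz n (i+d) x * Iexpr A x n (i+e)) := by
      funext i; ring
    rw [this]
    exact (hsz_shift.mul_left ε').add (hTsum.mul_left C)
  have habs_sum : Summable (fun i : ℕ => |u (i+d) - f x * szasz n (i+d) x|) := by
    apply Summable.of_nonneg_of_le (fun i => abs_nonneg _) hterm hdom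
  have hsum_main : Summable (fun i : ℕ => u (i+d) - f x * szasz n (i+d) x) :=
    hu_shift_sum.sub (hsz_shift.mul_left (f x))
  -- final bound
  have hbig : |∑' i : ℕ, (u (i+d) - f x * szasz n (i+d) x)|
      ≤ ε' + C * ∑' i : ℕ, szasz n (i+d) x * Iexpr A x n (i+e) := by
    have s1 : |∑' i : ℕ, (u (i+d) - f x * szasz n (i+d) x)|
        ≤ ∑' i : ℕ, |u (i+d) - f x * szasz n (i+d) x| := by
      rw [← Real.norm_eq_abs]
      exact (norm_tsum_le_tsum_norm (by simpa using habs_sum))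
    have s2 : ∑' i : ℕ, |u (i+d) - f x * szasz n (i+d) x|
        ≤ ∑' i : ℕ, szasz n (i+d) x * (ε' + C * Iexpr A x n (i+e)) :=
      Summable.tsum_le_tsum hterm habs_sum hdom
    have s3 : ∑' i : ℕ, szasz n (i+d) x * (ε' + C * Iexpr A x n (i+e))
        = ε' * (∑' i : ℕ, szasz n (i+d) x)
          + C * ∑' i : ℕ, szasz n (i+d) x * Iexpr A x n (i+e) := by
      have hpt : (fun i : ℕ => szasz n (i+d) x * (ε' + C * Iexpr A x n (i+e)))
          = fun i : ℕ => ε' * szasz n (i+d) x + C * (szasz n (i+d) x * Iexpr A x n (i+e)) := by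
        funext i; ring
      rw [hpt, Summable.tsum_add (hsz_shift.mul_left ε') (hTsum.mul_left C),
        tsum_mul_left, tsum_mul_left]
    have s4 : ∑' i : ℕ, szasz n (i+d) x ≤ 1 := by
      have := h2
      linarith
    have s5 : ε' * (∑' i : ℕ, szasz n (i+d) x) ≤ ε' := by
      nth_rewrite 2 [show ε' = ε' * 1 by ring]
      exact mul_le_mul_of_nonneg_left s4 hε
    calc |∑' i : ℕ, (u (i+d) - f x * szasz n (i+d) x)|
        ≤ _ := s1.trans s2
      _ = _ := s3
      _ ≤ ε' + C * ∑' i : ℕ, szasz n (i+d) x * Iexpr A x n (i+e) := by linarith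
  calc |Sop n j f x - f x|
      = |(f 0 - f x) * F + ∑' i : ℕ, (u (i+d) - f x * szasz n (i+d) x)| := by rw [hident]
    _ ≤ |(f 0 - f x) * F| + |∑' i : ℕ, (u (i+d) - f x * szasz n (i+d) x)| := abs_add_le _ _
    _ ≤ |f 0 - f x| * F + (ε' + C * ∑' i : ℕ, szasz n (i+d) x * Iexpr A x n (i+e)) := by
        rw [abs_mul, abs_of_nonneg hF0]
        linarith [hbig]
    _ = _ := by ring


/-- pointwise convergence for continuous functions in `E`. -/
theorem stmt_7 (j : ℤ) (x : ℝ) (hx : 0 < x) (f : ℝ → ℝ)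
    (hfc : ContinuousOn f (Set.Ici 0)) (hfE : ∃ A ≥ (0 : ℝ), MemE A f) :
    Filter.Tendsto (fun n : ℕ => Sop n j f x) Filter.atTop (nhds (f x)) := by
  obtain ⟨A, hA, hloc, K, hKpos, hKb⟩ := hfE
  have hmeas : AEStronglyMeasurable f (volume.restrict (Set.Ioi 0)) :=
    (hloc.aestronglyMeasurable).mono_measure
      (Measure.restrict_mono Set.Ioi_subset_Ici_self le_rfl)
  rw [Metric.tendsto_atTop]
  intro ε hε
  have hcw : ContinuousWithinAt f (Set.Ici 0) x := hfc x (Set.mem_Ici.2 hx.le)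
  rw [Metric.continuousWithinAt_iff] at hcw
  obtain ⟨δ, hδ, hδball⟩ := hcw (ε/4) (by linarith)
  set C : ℝ := (K + |f x|)/δ^2 with hC
  have hC0 : 0 ≤ C := by positivity
  have hεC : ∀ t ≥ (0:ℝ), |f t - f x| ≤ ε/4 + C * (Real.exp (A*t) * (t - x)^2) := by
    intro t ht
    by_cases hclose : dist t x < δ
    · have h := hδball (Set.mem_Ici.2 ht) hclose
      have hpos : 0 ≤ C * (Real.exp (A*t)*(t-x)^2) := by positivity
      rw [Real.dist_eq] at h
      linarith
    · push_neg at hclose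
      rw [Real.dist_eq] at hclose
      have h1 : |f t - f x| ≤ |f t| + |f x| := by
        have := norm_sub_le (f t) (f x)
        simpa [Real.norm_eq_abs] using this
      have h2 : |f t| ≤ K * Real.exp (A*t) := hKb t ht
      have hexp1 : 1 ≤ Real.exp (A*t) := Real.one_le_exp (by positivity)
      have h3 : |f x| ≤ |f x| * Real.exp (A*t) :=
        le_mul_of_one_le_right (abs_nonneg _) hexp1
      have h4 : |f t - f x| ≤ (K + |f x|) * Real.exp (A*t) := by nlinarith
      have h5 : (1:ℝ) ≤ (t-x)^2/δ^2 := by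
        rw [le_div_iff₀ (by positivity)]
        nlinarith [sq_abs (t-x)]
      have h6 : |f t - f x| ≤ (K + |f x|) * Real.exp (A*t) * ((t-x)^2/δ^2) := by
        calc |f t - f x| ≤ (K + |f x|) * Real.exp (A*t) := h4
          _ ≤ (K + |f x|) * Real.exp (A*t) * ((t-x)^2/δ^2) :=
            le_mul_of_one_le_right (by positivity) h5
      have h7 : (K + |f x|) * Real.exp (A*t) * ((t-x)^2/δ^2)
          = C * (Real.exp (A*t) * (t-x)^2) := by
        rw [hC]
        field_simp
      have h8 : 0 < ε/4 := by linarith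
      rw [h7] at h6
      linarith
  have hF := F_tendsto j.toNat hx
  have hT := T_tendsto j.toNat (-j).toNat hA hx
  have hev1 : ∀ᶠ n : ℕ in atTop,
      |f 0 - f x| * (∑ k ∈ Finset.range j.toNat, szasz n k x) < ε/4 := by
    have h := hF.const_mul (|f 0 - f x|)
    rw [mul_zero] at h
    exact h.eventually_lt_const (by linarith)
  have hev2 : ∀ᶠ n : ℕ in atTop,
      C * (∑' i : ℕ, szasz n (i + j.toNat) x * Iexpr A x n (i + (-j).toNat)) < ε/4 := by
    have h := hT.const_mul C
    rw [mul_zero] at h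
    exact h.eventually_lt_const (by linarith)
  have hev3 : ∀ᶠ n : ℕ in atTop, A < (n:ℝ) := by
    obtain ⟨N, hN⟩ := exists_nat_gt A
    filter_upwards [eventually_ge_atTop N] with n hn
    have : (N:ℝ) ≤ (n:ℝ) := by exact_mod_cast hn
    linarith
  have hev4 : ∀ᶠ n : ℕ in atTop, 0 < n := eventually_gt_atTop 0
  have hall := ((hev1.and hev2).and (hev3.and hev4))
  rw [eventually_atTop] at hall
  obtain ⟨Nb, hNb⟩ := hall
  refine ⟨Nb, fun n hn => ?_⟩
  obtain ⟨⟨hb1, hb2⟩, hb3, hb4⟩ := hNb n hn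
  rw [Real.dist_eq]
  have hmain := assembly hA hx j hb3 hb4 hmeas hKb hεC (by linarith) hC0
  calc |Sop n j f x - f x|
      ≤ |f 0 - f x| * (∑ k ∈ Finset.range j.toNat, szasz n k x)
        + ε/4 + C * ∑' i : ℕ, szasz n (i + j.toNat) x * Iexpr A x n (i + (-j).toNat) := hmain
    _ < ε := by linarith
end

section
/- Let (b_n)_{n≥1} be a sequence of positive real numbers with b_n → 1 as n → ∞, and let x > 0 and β > 0. Then there exist constants c > 0 and C > 0 such that for all sufficiently large integers n, ∑_{k ∈ ℕ, |k/n − x| > β} s_{n,k}(x)·b_n^k ≤ C e^{-cn}. -/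
open MeasureTheory Real Filter

lemma szasz_mul_le (n k : ℕ) (x b r : ℝ) (hx : 0 ≤ x) (hb : 0 ≤ b) (hr : 0 < r) :
    szasz n k x * b ^ k ≤ Real.exp ((n : ℝ) * x * (b * r - 1)) * (1 / r) ^ k := by
  have h1 : szasz n k x * b ^ k
      = Real.exp (-(n:ℝ) * x) * (((n:ℝ) * x * b) ^ k / (Nat.factorial k)) := by
    unfold szasz
    rw [mul_pow]
    ring
  have h3 : ((n:ℝ)*x*b*r) ^ k / (Nat.factorial k) ≤ Real.exp ((n:ℝ)*x*b*r) :=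
    Real.pow_div_factorial_le_exp _ (by positivity) k
  have h4 : ((n:ℝ)*x*b) ^ k / (Nat.factorial k)
      = ((n:ℝ)*x*b*r) ^ k / (Nat.factorial k) * (1/r) ^ k := by
    rw [div_mul_eq_mul_div, ← mul_pow]
    congr 2
    field_simp
  have h5 : ((n:ℝ)*x*b) ^ k / (Nat.factorial k) ≤ Real.exp ((n:ℝ)*x*b*r) * (1/r) ^ k := by
    rw [h4]
    exact mul_le_mul_of_nonneg_right h3 (by positivity)
  calc szasz n k x * b ^ k
      = Real.exp (-(n:ℝ) * x) * (((n:ℝ) * x * b) ^ k / (Nat.factorial k)) := h1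
    _ ≤ Real.exp (-(n:ℝ) * x) * (Real.exp ((n:ℝ)*x*b*r) * (1/r) ^ k) :=
        mul_le_mul_of_nonneg_left h5 (Real.exp_nonneg _)
    _ = Real.exp ((n : ℝ) * x * (b * r - 1)) * (1 / r) ^ k := by
        rw [← mul_assoc, ← Real.exp_add]
        ring_nf


private lemma upper_tail_core (x β t A θ b : ℝ) (n k : ℕ)
    (hx : 0 < x) (ht0 : 0 < t) (hL : 0 < Real.log t) (hA : 0 < A)
    (hkey : x * (t - 1) - (x + β) * Real.log t ≤ -A)
    (hθ1 : θ ≤ 1) (hθA : θ * ((x + β) * Real.log t) ≤ A / 2)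
    (hb : 0 < b) (hbε : x * t * (b - 1) ≤ A / 4)
    (hk : (n : ℝ) * (x + β) ≤ (k : ℝ)) (hn0 : (0:ℝ) < n) :
    szasz n k x * b ^ k
      ≤ Real.exp (-(A/4) * n) * Real.exp (-(θ * Real.log t)) ^ k := by
  have step1 := szasz_mul_le n k x b t hx.le hb.le ht0
  have h1t : (1:ℝ)/t = Real.exp (-Real.log t) := by
    rw [Real.exp_neg, Real.exp_log ht0, one_div]
  have step2 : ((1:ℝ)/t) ^ k = Real.exp ((k:ℝ) * -Real.log t) := by
    rw [h1t, Real.exp_nat_mul]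
  have hbr : x * (b*t - 1) - (1-θ) * ((x+β) * Real.log t) ≤ -(A/4) := by
    have expand : x * (b*t - 1) = x * (t - 1) + x * t * (b - 1) := by ring
    linarith
  have hk2 : (1-θ) * Real.log t * ((n:ℝ) * (x+β)) ≤ (1-θ) * Real.log t * (k:ℝ) :=
    mul_le_mul_of_nonneg_left hk (mul_nonneg (by linarith) hL.le)
  have hbound : (n:ℝ) * x * (b*t - 1) + (k:ℝ) * (-Real.log t)
      ≤ -(A/4) * n + (k:ℝ) * (-(θ * Real.log t)) := by
    have e2 : (n:ℝ) * (x * (b*t - 1) - (1-θ) * ((x+β) * Real.log t))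
        ≤ (n:ℝ) * (-(A/4)) := mul_le_mul_of_nonneg_left hbr hn0.le
    have e3 : (k:ℝ) * (-Real.log t)
        = -((1-θ) * Real.log t * (k:ℝ)) + (k:ℝ) * (-(θ * Real.log t)) := by ring
    have e4 : (n:ℝ) * (x * (b*t - 1) - (1-θ) * ((x+β) * Real.log t))
        = (n:ℝ) * x * (b*t - 1) - (1-θ) * Real.log t * ((n:ℝ) * (x+β)) := by ring
    have e5 : (n:ℝ) * (-(A/4)) = -(A/4) * n := by ring
    linarith
  calc szasz n k x * b ^ k ≤ Real.exp ((n:ℝ) * x * (b*t - 1)) * (1/t) ^ k := step1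
    _ = Real.exp ((n:ℝ) * x * (b*t - 1) + (k:ℝ) * -Real.log t) := by
        rw [step2, ← Real.exp_add]
    _ ≤ Real.exp (-(A/4) * n + (k:ℝ) * (-(θ * Real.log t))) := Real.exp_le_exp.mpr hbound
    _ = Real.exp (-(A/4) * n) * Real.exp (-(θ * Real.log t)) ^ k := by
        rw [Real.exp_add, Real.exp_nat_mul]

private lemma upper_tail (x β : ℝ) (hx : 0 < x) (hβ : 0 < β) :
    ∃ c > (0:ℝ), ∃ ρ : ℝ, 0 ≤ ρ ∧ ρ < 1 ∧ ∃ ε > (0:ℝ),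
      ∀ b : ℝ, 0 < b → b ≤ 1 + ε → ∀ n : ℕ, 1 ≤ n → ∀ k : ℕ,
        (n : ℝ) * (x + β) ≤ (k : ℝ) →
        szasz n k x * b ^ k ≤ Real.exp (-c * n) * ρ ^ k := by
  have ht0 : (0:ℝ) < 1 + β / (2*x) := by positivity
  have ht1 : (1:ℝ) < 1 + β / (2*x) := by
    have : 0 < β / (2*x) := by positivity
    linarith
  have hL : 0 < Real.log (1 + β / (2*x)) := Real.log_pos ht1
  have hA : 0 < β^2 / (4*x*(1 + β / (2*x))) := by positivity
  have hkey : x * ((1 + β / (2*x)) - 1) - (x+β) * Real.log (1 + β / (2*x))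
      ≤ -(β^2 / (4*x*(1 + β / (2*x)))) := by
    have h2 := Real.log_le_sub_one_of_pos (show (0:ℝ) < (1 + β / (2*x))⁻¹ by positivity)
    rw [Real.log_inv] at h2
    have h3 : 1 - (1 + β / (2*x))⁻¹ ≤ Real.log (1 + β / (2*x)) := by linarith
    have h5 : (x+β) * (1 - (1 + β / (2*x))⁻¹) ≤ (x+β) * Real.log (1 + β / (2*x)) :=
      mul_le_mul_of_nonneg_left h3 (by linarith)
    have h6 : x * ((1 + β / (2*x)) - 1) - (x+β) * (1 - (1 + β / (2*x))⁻¹)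
        = -(β^2 / (4*x*(1 + β / (2*x)))) := by
      field_simp
      ring
    linarith
  set Lg : ℝ := Real.log (1 + β / (2*x))
  set Ag : ℝ := β^2 / (4*x*(1 + β / (2*x)))
  have hxL : 0 < (x+β) * Lg := by positivity
  have hθ1 : min (Ag / (2*((x+β)*Lg))) 1 ≤ 1 := min_le_right _ _
  have hθpos : 0 < min (Ag / (2*((x+β)*Lg))) 1 := lt_min (by positivity) one_pos
  have hθA : (min (Ag / (2*((x+β)*Lg))) 1) * ((x+β)*Lg) ≤ Ag / 2 := by
    calc (min (Ag / (2*((x+β)*Lg))) 1) * ((x+β)*Lg)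
        ≤ Ag / (2*((x+β)*Lg)) * ((x+β)*Lg) :=
          mul_le_mul_of_nonneg_right (min_le_left _ _) hxL.le
      _ = Ag / 2 := by field_simp
  refine ⟨Ag/4, by positivity, Real.exp (-(min (Ag / (2*((x+β)*Lg))) 1 * Lg)),
    Real.exp_nonneg _, Real.exp_lt_one_iff.mpr (neg_lt_zero.mpr (mul_pos hθpos hL)),
    Ag/(4*(x*(1 + β / (2*x)))), by positivity, ?_⟩
  intro b hb hbε n hn k hk
  have hn0 : (0:ℝ) < n := by exact_mod_cast Nat.lt_of_lt_of_le Nat.zero_lt_one hn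
  have hbε' : x * (1 + β / (2*x)) * (b - 1) ≤ Ag / 4 := by
    rcases le_or_gt b 1 with h | h
    · have h0 : x * (1 + β / (2*x)) * (b - 1) ≤ 0 :=
        mul_nonpos_of_nonneg_of_nonpos (by positivity) (by linarith)
      linarith
    · have hble : b - 1 ≤ Ag/(4*(x*(1 + β / (2*x)))) := by linarith
      calc x * (1 + β / (2*x)) * (b-1) ≤ x * (1 + β / (2*x)) * (Ag/(4*(x*(1 + β / (2*x))))) :=
            mul_le_mul_of_nonneg_left hble (by positivity)
        _ = Ag/4 := by field_simp
  have := upper_tail_core x β (1 + β / (2*x)) Ag (min (Ag / (2*((x+β)*Lg))) 1) b n k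
    hx ht0 hL hA hkey hθ1 hθA hb hbε' hk hn0
  calc szasz n k x * b ^ k
      ≤ Real.exp (-(Ag/4) * n) * Real.exp (-(min (Ag / (2*((x+β)*Lg))) 1 * Lg)) ^ k := this
    _ = Real.exp (-(Ag/4) * n) * Real.exp (-(min (Ag / (2*((x+β)*Lg))) 1 * Lg)) ^ k := rfl


private lemma lower_tail_core (x β s s' A b : ℝ) (n k : ℕ)
    (hx : 0 < x) (hs0 : 0 < s) (hss' : s < s') (hs'1 : s' ≤ 1)
    (hb : 0 < b)
    (hbr : x * (b * s' - 1) - (x - β) * Real.log s ≤ -(A/4))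
    (hk : (k:ℝ) ≤ (n:ℝ) * (x - β)) (hn0 : (0:ℝ) < n) :
    szasz n k x * b ^ k ≤ Real.exp (-(A/4) * n) * (s/s') ^ k := by
  have hs'0 : 0 < s' := hs0.trans hss'
  have step1 := szasz_mul_le n k x b s' hx.le hb.le hs'0
  have hsplit : ((1:ℝ)/s') ^ k = ((1:ℝ)/s) ^ k * (s/s') ^ k := by
    rw [← mul_pow]
    congr 1
    field_simp
  have hs1 : s < 1 := lt_of_lt_of_le hss' hs'1
  have hlogs : Real.log s < 0 := Real.log_neg hs0 hs1
  have h1s : (1:ℝ)/s = Real.exp (-Real.log s) := by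
    rw [Real.exp_neg, Real.exp_log hs0, one_div]
  have h2 : ((1:ℝ)/s) ^ k = Real.exp ((k:ℝ) * -Real.log s) := by
    rw [h1s, Real.exp_nat_mul]
  have h3 : (k:ℝ) * -Real.log s ≤ (n:ℝ)*(x-β) * -Real.log s :=
    mul_le_mul_of_nonneg_right hk (by linarith)
  have hexp : (n:ℝ)*x*(b*s'-1) + (k:ℝ) * -Real.log s ≤ -(A/4)*(n:ℝ) := by
    have e2 : (n:ℝ) * (x*(b*s'-1) - (x-β)*Real.log s) ≤ (n:ℝ) * (-(A/4)) :=
      mul_le_mul_of_nonneg_left hbr hn0.le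
    have e4 : (n:ℝ) * (x*(b*s'-1) - (x-β)*Real.log s)
        = (n:ℝ)*x*(b*s'-1) - (n:ℝ)*(x-β)*Real.log s := by ring
    have e5 : (n:ℝ)*(x-β) * -Real.log s = -((n:ℝ)*(x-β)*Real.log s) := by ring
    have e6 : (n:ℝ) * (-(A/4)) = -(A/4)*(n:ℝ) := by ring
    linarith
  calc szasz n k x * b^k ≤ Real.exp ((n:ℝ)*x*(b*s'-1)) * (1/s')^k := step1
    _ = (Real.exp ((n:ℝ)*x*(b*s'-1)) * Real.exp ((k:ℝ) * -Real.log s)) * (s/s')^k := by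
        rw [hsplit, h2]; ring
    _ = Real.exp ((n:ℝ)*x*(b*s'-1) + (k:ℝ) * -Real.log s) * (s/s')^k := by
        rw [Real.exp_add]
    _ ≤ Real.exp (-(A/4)*(n:ℝ)) * (s/s')^k :=
        mul_le_mul_of_nonneg_right (Real.exp_le_exp.mpr hexp) (by positivity)

private lemma lower_tail (x β : ℝ) (hx : 0 < x) (hβ : 0 < β) :
    ∃ c > (0:ℝ), ∃ ρ : ℝ, 0 ≤ ρ ∧ ρ < 1 ∧ ∃ ε > (0:ℝ),
      ∀ b : ℝ, 0 < b → b ≤ 1 + ε → ∀ n : ℕ, 1 ≤ n → ∀ k : ℕ,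
        (k : ℝ) < (n : ℝ) * (x - β) →
        szasz n k x * b ^ k ≤ Real.exp (-c * n) * ρ ^ k := by
  by_cases hβx : β < x
  · obtain ⟨s, hsdef⟩ : ∃ s : ℝ, s = 1 - β / (2*x) := ⟨_, rfl⟩
    have hhalf : β / (2*x) < 1/2 := by
      rw [div_lt_iff₀ (by positivity)]
      linarith
    have hhalf0 : 0 < β / (2*x) := by positivity
    have hs0 : 0 < s := by rw [hsdef]; linarith
    have hs1 : s < 1 := by rw [hsdef]; linarith
    obtain ⟨A, hAdef⟩ : ∃ A : ℝ, A = β^2 / (4*x*s) := ⟨_, rfl⟩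
    have hA : 0 < A := by rw [hAdef]; positivity
    have hkey : x * (s - 1) - (x - β) * Real.log s ≤ -A := by
      have h2 := Real.log_le_sub_one_of_pos (show (0:ℝ) < s⁻¹ by positivity)
      rw [Real.log_inv] at h2
      have h3 : 1 - s⁻¹ ≤ Real.log s := by linarith
      have h5 : (x - β) * (1 - s⁻¹) ≤ (x - β) * Real.log s :=
        mul_le_mul_of_nonneg_left h3 (by linarith)
      have hβs : β = 2*x*(1-s) := by rw [hsdef]; field_simp; ring
      have h6 : x * (s - 1) - (x - β) * (1 - s⁻¹) = -A := by
        rw [hAdef, hβs]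
        have hsne : s ≠ 0 := ne_of_gt hs0
        have hxne : x ≠ 0 := ne_of_gt hx
        field_simp
        ring
      linarith
    obtain ⟨s', hs'def⟩ : ∃ s' : ℝ, s' = s + min (A/(2*x)) ((1-s)/2) := ⟨_, rfl⟩
    have hδ0 : 0 < min (A/(2*x)) ((1-s)/2) := lt_min (by positivity) (by linarith)
    have hss' : s < s' := by rw [hs'def]; linarith
    have hs'1 : s' ≤ 1 := by
      have := min_le_right (A/(2*x)) ((1-s)/2)
      rw [hs'def]; linarith
    have hxδ : x * (s' - s) ≤ A/2 := by
      have h1 := min_le_left (A/(2*x)) ((1-s)/2)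
      have h7 : s' - s = min (A/(2*x)) ((1-s)/2) := by rw [hs'def]; ring
      calc x * (s' - s) ≤ x * (A/(2*x)) := by
            rw [h7]; exact mul_le_mul_of_nonneg_left h1 hx.le
        _ = A/2 := by field_simp
    have hs'0 : 0 < s' := hs0.trans hss'
    refine ⟨A/4, by linarith, s/s', div_nonneg hs0.le hs'0.le,
      (div_lt_one hs'0).mpr hss', A/(4*x), div_pos hA (by positivity), ?_⟩
    intro b hb hbε n hn k hk
    have hn0 : (0:ℝ) < n := by exact_mod_cast Nat.lt_of_lt_of_le Nat.zero_lt_one hn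
    have hbr : x * (b * s' - 1) - (x - β) * Real.log s ≤ -(A/4) := by
      have expand : x * (b*s' - 1) = x * (s - 1) + x * (s' - s) + x * s' * (b - 1) := by
        ring
      have hlast : x * s' * (b - 1) ≤ A/4 := by
        rcases le_or_gt b 1 with h | h
        · have : x * s' * (b - 1) ≤ 0 :=
            mul_nonpos_of_nonneg_of_nonpos (by positivity) (by linarith)
          linarith
        · have h8 : x * s' * (b-1) ≤ x * 1 * (b-1) := by
            apply mul_le_mul_of_nonneg_right _ (by linarith)
            exact mul_le_mul_of_nonneg_left hs'1 hx.le
          have h9 : x * (b - 1) ≤ x * (A/(4*x)) :=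
            mul_le_mul_of_nonneg_left (by linarith) hx.le
          have h10 : x * (A/(4*x)) = A/4 := by field_simp
          linarith
      linarith
    exact lower_tail_core x β s s' A b n k hx hs0 hss' hs'1 hb hbr hk.le hn0
  · refine ⟨1, one_pos, 1/2, by norm_num, by norm_num, 1, one_pos, ?_⟩
    intro b _ _ n _ k hk
    exfalso
    push_neg at hβx
    have h1 : (n:ℝ) * (x - β) ≤ 0 :=
      mul_nonpos_of_nonneg_of_nonpos (Nat.cast_nonneg n) (by linarith)
    have h2 : (0:ℝ) ≤ (k:ℝ) := Nat.cast_nonneg k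
    linarith

/-- exponential decay of weighted Szász tails. -/
theorem stmt_12 (b : ℕ → ℝ) (hb : ∀ n, 0 < b n)
    (hb1 : Filter.Tendsto b Filter.atTop (nhds 1))
    (x β : ℝ) (hx : 0 < x) (hβ : 0 < β) :
    ∃ c > (0 : ℝ), ∃ C > (0 : ℝ), ∃ N : ℕ, ∀ n ≥ N,
      (∑' k : ℕ, if β < |(k : ℝ) / n - x| then szasz n k x * b n ^ k else 0)
        ≤ C * Real.exp (-c * n) := by
  obtain ⟨c₁, hc₁, ρ₁, hρ₁0, hρ₁1, ε₁, hε₁, H₁⟩ := upper_tail x β hx hβ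
  obtain ⟨c₂, hc₂, ρ₂, hρ₂0, hρ₂1, ε₂, hε₂, H₂⟩ := lower_tail x β hx hβ
  have hev : ∀ᶠ n in Filter.atTop, b n < 1 + min ε₁ ε₂ :=
    hb1.eventually_lt_const (by
      have := lt_min hε₁ hε₂
      linarith [min_le_left ε₁ ε₂])
  obtain ⟨N₀, hN₀⟩ := Filter.eventually_atTop.mp hev
  have hC1 : (0:ℝ) < (1 - ρ₁)⁻¹ := inv_pos.mpr (by linarith)
  have hC2 : (0:ℝ) < (1 - ρ₂)⁻¹ := inv_pos.mpr (by linarith)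
  refine ⟨min c₁ c₂, lt_min hc₁ hc₂, (1-ρ₁)⁻¹ + (1-ρ₂)⁻¹, by linarith, max N₀ 1, ?_⟩
  intro n hn
  have hn1 : 1 ≤ n := le_trans (le_max_right _ _) hn
  have hbn : b n < 1 + min ε₁ ε₂ := hN₀ n (le_trans (le_max_left _ _) hn)
  have hn0 : (0:ℝ) < n := by exact_mod_cast Nat.lt_of_lt_of_le Nat.zero_lt_one hn1
  have hgpt : ∀ k : ℕ, (if β < |(k:ℝ)/n - x| then szasz n k x * b n ^ k else 0)
      ≤ Real.exp (-(min c₁ c₂) * n) * (ρ₁ ^ k + ρ₂ ^ k) := by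
    intro k
    have hρ₁k : (0:ℝ) ≤ ρ₁ ^ k := pow_nonneg hρ₁0 k
    have hρ₂k : (0:ℝ) ≤ ρ₂ ^ k := pow_nonneg hρ₂0 k
    have hexpn : (0:ℝ) < Real.exp (-(min c₁ c₂) * n) := Real.exp_pos _
    split_ifs with h
    · have hcm : Real.exp (-(min c₁ c₂) * (n:ℝ)) ≥ Real.exp (-c₁ * n) ∧
          Real.exp (-(min c₁ c₂) * (n:ℝ)) ≥ Real.exp (-c₂ * n) := by
        constructor <;> apply Real.exp_le_exp.mpr <;>
          [nlinarith [min_le_left c₁ c₂]; nlinarith [min_le_right c₁ c₂]]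
      rcases lt_abs.mp h with h' | h'
      · have hk : (n:ℝ) * (x + β) ≤ (k:ℝ) := by
          have h1 : x + β < (k:ℝ)/n := by linarith
          have h2 : (n:ℝ) * ((k:ℝ)/n) = (k:ℝ) := by field_simp
          nlinarith
        have := H₁ (b n) (hb n) (by linarith [min_le_left ε₁ ε₂]) n hn1 k hk
        calc (szasz n k x * b n ^ k) ≤ Real.exp (-c₁*n) * ρ₁^k := this
          _ ≤ Real.exp (-(min c₁ c₂) * n) * ρ₁^k :=
              mul_le_mul_of_nonneg_right hcm.1 hρ₁k
          _ ≤ Real.exp (-(min c₁ c₂) * n) * (ρ₁^k + ρ₂^k) := by nlinarith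
      · have hk : (k:ℝ) < (n:ℝ) * (x - β) := by
          have h1 : (k:ℝ)/n < x - β := by linarith
          have h2 : (n:ℝ) * ((k:ℝ)/n) = (k:ℝ) := by field_simp
          nlinarith
        have := H₂ (b n) (hb n) (by linarith [min_le_right ε₁ ε₂]) n hn1 k hk
        calc (szasz n k x * b n ^ k) ≤ Real.exp (-c₂*n) * ρ₂^k := this
          _ ≤ Real.exp (-(min c₁ c₂) * n) * ρ₂^k :=
              mul_le_mul_of_nonneg_right hcm.2 hρ₂k
          _ ≤ Real.exp (-(min c₁ c₂) * n) * (ρ₁^k + ρ₂^k) := by nlinarith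
    · positivity
  have hsum_g : Summable (fun k : ℕ => Real.exp (-(min c₁ c₂)*(n:ℝ)) * (ρ₁^k + ρ₂^k)) :=
    (((summable_geometric_of_lt_one hρ₁0 hρ₁1).add
      (summable_geometric_of_lt_one hρ₂0 hρ₂1)).mul_left _)
  have hf_nonneg : ∀ k : ℕ,
      0 ≤ (if β < |(k:ℝ)/n - x| then szasz n k x * b n ^ k else 0) := by
    intro k
    split_ifs
    · have h1 : 0 ≤ szasz n k x := by
        unfold szasz
        positivity
      exact mul_nonneg h1 (pow_nonneg (hb n).le k)
    · exact le_refl 0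
  have hf : Summable (fun k : ℕ => if β < |(k:ℝ)/n - x| then szasz n k x * b n ^ k else 0) :=
    Summable.of_nonneg_of_le hf_nonneg hgpt hsum_g
  calc (∑' k : ℕ, if β < |(k:ℝ)/n - x| then szasz n k x * b n ^ k else 0)
      ≤ ∑' k : ℕ, Real.exp (-(min c₁ c₂)*(n:ℝ)) * (ρ₁^k + ρ₂^k) :=
        Summable.tsum_le_tsum hgpt hf hsum_g
    _ = Real.exp (-(min c₁ c₂)*(n:ℝ)) * ((1-ρ₁)⁻¹ + (1-ρ₂)⁻¹) := by
        rw [tsum_mul_left, Summable.tsum_add (summable_geometric_of_lt_one hρ₁0 hρ₁1)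
          (summable_geometric_of_lt_one hρ₂0 hρ₂1),
          tsum_geometric_of_lt_one hρ₁0 hρ₁1, tsum_geometric_of_lt_one hρ₂0 hρ₂1]
    _ = ((1-ρ₁)⁻¹ + (1-ρ₂)⁻¹) * Real.exp (-(min c₁ c₂)*(n:ℝ)) := mul_comm _ _
end

section
/- Let j ∈ ℤ and k ≥ 1 an integer. For every function f : (0,∞) → ℝ of class C^{2k} and every x > 0, x^j · D^k( x^{k-j} · D^k f )(x) equals the k-th iterate of the operator g ↦ (1−j)·g' + (x ↦ x·g''(x)) applied to f, evaluated at x; that is, D_j^{2k} = (D_j^2)^k where D_j^2 g(x) = (1−j)g'(x) + x·g''(x). -/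
open MeasureTheory Real Filter

/-- The second-order differential operator `D_j^2 g = (1-j)g' + x g''`. -/
noncomputable def Dj2 (j : ℤ) (g : ℝ → ℝ) : ℝ → ℝ :=
  fun x => (1 - (j : ℝ)) * deriv g x + x * deriv (deriv g) x


lemma iterCD {f : ℝ → ℝ} {n m : ℕ} (h : ContDiffOn ℝ ((n+m : ℕ)) f (Set.Ioi 0)) :
    ContDiffOn ℝ (n : ℕ) (iteratedDeriv m f) (Set.Ioi 0) := by
  induction m generalizing f with
  | zero => simpa using h
  | succ m ih =>
    rw [iteratedDeriv_succ']
    exact ih (h.deriv_of_isOpen isOpen_Ioi (by exact_mod_cast Nat.le_refl (n+m+1)))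

lemma iterDiffAt {f : ℝ → ℝ} {n m : ℕ} (h : ContDiffOn ℝ (n : ℕ) f (Set.Ioi 0))
    (hm : m + 1 ≤ n) {x : ℝ} (hx : 0 < x) : DifferentiableAt ℝ (iteratedDeriv m f) x := by
  have h1 : ContDiffOn ℝ ((1 + m : ℕ)) f (Set.Ioi 0) :=
    h.of_le (by exact_mod_cast (by omega : 1 + m ≤ n))
  have := (iterCD h1).differentiableOn (by simp)
  exact (this x hx).differentiableAt (Ioi_mem_nhds hx)

lemma iterCongr {f g : ℝ → ℝ} (hfg : Set.EqOn f g (Set.Ioi 0)) (n : ℕ) :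
    Set.EqOn (iteratedDeriv n f) (iteratedDeriv n g) (Set.Ioi 0) := by
  induction n with
  | zero => simpa using hfg
  | succ n ih =>
    intro x hx
    rw [iteratedDeriv_succ, iteratedDeriv_succ]
    exact Filter.EventuallyEq.deriv_eq
      (Filter.eventuallyEq_of_mem (Ioi_mem_nhds hx) ih)

lemma lemE {f : ℝ → ℝ} {j : ℤ} (m : ℕ) (hf : ContDiffOn ℝ ((m+2 : ℕ)) f (Set.Ioi 0)) :
    ∀ x ∈ Set.Ioi (0:ℝ), iteratedDeriv m (Dj2 j f) x
      = ((m:ℝ)+1-(j:ℝ)) * iteratedDeriv (m+1) f x + x * iteratedDeriv (m+2) f x := by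
  induction m with
  | zero =>
    intro x hx
    simp only [iteratedDeriv_zero, Dj2, iteratedDeriv_succ, iteratedDeriv_one]
    norm_num
  | succ m ih =>
    intro x hx
    have ih' := ih (hf.of_le (by exact_mod_cast (by omega : m+2 ≤ m+1+2)))
    rw [iteratedDeriv_succ]
    have heq : deriv (iteratedDeriv m (Dj2 j f)) x
        = deriv (fun t => ((m:ℝ)+1-(j:ℝ)) * iteratedDeriv (m+1) f t
            + t * iteratedDeriv (m+2) f t) x :=
      Filter.EventuallyEq.deriv_eq (Filter.eventuallyEq_of_mem (Ioi_mem_nhds hx) ih')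
    rw [heq]
    have d1 : DifferentiableAt ℝ (iteratedDeriv (m+1) f) x :=
      iterDiffAt hf (by omega) hx
    have d2 : DifferentiableAt ℝ (iteratedDeriv (m+2) f) x :=
      iterDiffAt hf (by omega) hx
    rw [deriv_fun_add ((differentiableAt_const _).fun_mul d1)
        (differentiableAt_fun_id.fun_mul d2),
      deriv_const_mul _ d1, deriv_fun_mul differentiableAt_fun_id d2]
    rw [← iteratedDeriv_succ, ← iteratedDeriv_succ]
    simp only [deriv_id'']
    push_cast
    ring

lemma mainAux (j : ℤ) : ∀ (k : ℕ) (f : ℝ → ℝ),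
    ContDiffOn ℝ ((2*k : ℕ)) f (Set.Ioi 0) →
    ∀ x ∈ Set.Ioi (0:ℝ),
    x ^ j * iteratedDeriv k (fun t => t ^ ((k:ℤ) - j) * iteratedDeriv k f t) x
      = (Dj2 j)^[k] f x := by
  intro k
  induction k with
  | zero =>
    intro f hf x hx
    have hx0 : x ≠ 0 := ne_of_gt hx
    simp only [iteratedDeriv_zero, Function.iterate_zero, id]
    rw [show (((0:ℕ):ℤ)) - j = -j by simp, zpow_neg, ← mul_assoc,
      mul_inv_cancel₀ (zpow_ne_zero j hx0), one_mul]
  | succ k ih =>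
    intro f hf x hx
    have hx0 : x ≠ 0 := ne_of_gt hx
    have hf' : ContDiffOn ℝ ((2*k+1 : ℕ)) (deriv f) (Set.Ioi 0) :=
      hf.deriv_of_isOpen isOpen_Ioi
        (by exact_mod_cast (by omega : 2*k+1+1 ≤ 2*(k+1)))
    have hf'' : ContDiffOn ℝ ((2*k : ℕ)) (deriv (deriv f)) (Set.Ioi 0) :=
      hf'.deriv_of_isOpen isOpen_Ioi
        (by exact_mod_cast (by omega : 2*k+1 ≤ 2*k+1))
    have hD : ContDiffOn ℝ ((2*k : ℕ)) (Dj2 j f) (Set.Ioi 0) := by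
      have : ContDiffOn ℝ ((2*k : ℕ))
          (fun x => (1 - (j:ℝ)) * deriv f x + x * deriv (deriv f) x) (Set.Ioi 0) :=
        (contDiffOn_const.mul (hf'.of_le
          (by exact_mod_cast (by omega : 2*k ≤ 2*k+1)))).add
          (contDiffOn_id.mul hf'')
      exact this
    have key : Set.EqOn
        (deriv (fun t => t ^ (((k+1:ℕ):ℤ) - j) * iteratedDeriv (k+1) f t))
        (fun t => t ^ ((k:ℤ) - j) * iteratedDeriv k (Dj2 j f) t)
        (Set.Ioi 0) := by
      intro t ht
      have ht0 : (t:ℝ) ≠ 0 := ne_of_gt ht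
      have dz : DifferentiableAt ℝ (fun s : ℝ => s ^ (((k+1:ℕ):ℤ) - j)) t :=
        differentiableAt_zpow.mpr (Or.inl ht0)
      have d1 : DifferentiableAt ℝ (iteratedDeriv (k+1) f) t :=
        iterDiffAt hf (by omega) ht
      have hE := lemE (j := j) k
        (hf.of_le (by exact_mod_cast (by omega : k+2 ≤ 2*(k+1)))) t ht
      simp only []
      rw [deriv_fun_mul dz d1, deriv_zpow, hE, ← iteratedDeriv_succ]
      have e1 : ((k+1:ℕ):ℤ) - j - 1 = (k:ℤ) - j := by push_cast; ring
      have e2 : ((k+1:ℕ):ℤ) - j = 1 + ((k:ℤ) - j) := by push_cast; ring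
      rw [e1, e2, zpow_add₀ ht0, zpow_one]
      push_cast
      ring
    rw [Function.iterate_succ_apply, ← ih (Dj2 j f) hD x hx]
    congr 1
    rw [iteratedDeriv_succ']
    exact iterCongr key k hx

/-- `D_j^{2k}` is the `k`-th iterate of `D_j^2`. -/
theorem stmt_15 (j : ℤ) (k : ℕ) (hk : 1 ≤ k) (f : ℝ → ℝ)
    (hf : ContDiffOn ℝ (2 * k : ℕ) f (Set.Ioi 0)) (x : ℝ) (hx : 0 < x) :
    x ^ j * iteratedDeriv k (fun t => t ^ ((k : ℤ) - j) * iteratedDeriv k f t) x =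
      (Dj2 j)^[k] f x := mainAux j k f hf x hx
end
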